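/- Let (Γ, α) be an abstract GKM₃ graph with a quaternionic structure such that every quaternionic 2-face is a biangle or a noncomplex triangle, and every complex 2-face is one of the following: a triangle; a quadrangle admitting a compatible signed structure (γ_k) with γ_{k+2} = −γ_k (indices modulo 4); or a hexagon admitting a compatible signed structure (γ_k) with γ_{k+2} = γ_{k+1} − γ_k (indices modulo 6). Then Γ has no complex 2-face that is a hexagon. -/

import Mathlib

namespace GKMQ

/-- `x` equals `y` up to sign (`x` is a "lift" of the class of `y` mod sign). -/
def PM {m : ℕ} (x y : Fin m → ℤ) : Prop := x = y ∨ x = -y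

/-- coefficientwise coercion of an integer vector to `ℚ`. -/
def ratQ {m : ℕ} (x : Fin m → ℤ) : Fin m → ℚ := fun i => (x i : ℚ)

/-- An abstract graph: finite vertex and oriented-edge sets, a fixed-point-free
orientation-reversal involution `bar`, no loops; multiple edges are allowed. -/
structure Graph where
  V : Type
  E : Type
  fintypeV : Fintype V
  fintypeE : Fintype E
  src : E → V
  bar : E → E
  bar_invol : ∀ e, bar (bar e) = e
  bar_ne : ∀ e, bar e ≠ e
  no_loop : ∀ e, src (bar e) ≠ src e

/-- The terminal vertex of an oriented edge. -/
def Graph.tgt (G : Graph) (e : G.E) : G.V := G.src (G.bar e)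

/-- A connection on a graph; `map e` is a bijection `E_{i(e)} → E_{t(e)}` with
`∇_e e = ē` and `∇_{ē} = (∇_e)⁻¹` (its values outside `E_{i(e)}` are irrelevant). -/
structure Connection (G : Graph) where
  map : G.E → G.E → G.E
  map_src : ∀ e f, G.src f = G.src e → G.src (map e f) = G.tgt e
  map_self : ∀ e, map e e = G.bar e
  map_bar : ∀ e f, G.src f = G.src e → map (G.bar e) (map e f) = f

/-- Compatibility of a connection with an edge labeling (mod sign): for every edge `e`
and `f ∈ E_{i(e)}` there are lifts of the labels of `f` and `∇_e f` differing by an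
integer multiple of the label of `e`. -/
def CompatibleConn (G : Graph) {m : ℕ} (label : G.E → (Fin m → ℤ)) (C : Connection G) :
    Prop :=
  ∀ e f, G.src f = G.src e →
    ∃ x y : Fin m → ℤ, PM x (label f) ∧ PM y (label (C.map e f)) ∧
      ∃ c : ℤ, y = x + c • label e

/-- An axial function with values in `ℤ^m` modulo sign; `label` is a choice of
representatives, so that all labels are well defined up to sign. -/
structure Axial (G : Graph) (m : ℕ) where
  label : G.E → (Fin m → ℤ)
  label_bar : ∀ e, PM (label (G.bar e)) (label e)
  indep₂ : ∀ e f, G.src f = G.src e → e ≠ f →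
    LinearIndependent ℚ ![ratQ (label e), ratQ (label f)]
  exists_compat : ∃ C : Connection G, CompatibleConn G label C

/-- The GKM_k condition: at every vertex, any `k` of the labels are linearly
independent over `ℚ`. -/
def Axial.IsGKM {G : Graph} {m : ℕ} (A : Axial G m) (k : ℕ) : Prop :=
  ∀ v : G.V, ∀ s : Finset G.E, (∀ e ∈ s, G.src e = v) → s.card = k →
    LinearIndependent ℚ (fun e : {x // x ∈ s} => ratQ (A.label e.1))

/-- A full quaternionically compatible family of lifts at a vertex `v`: `L` assigns to
every edge at `v` a lift of its label, `ℓ` is a lift of the quaternionic weight, and the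
lifts of each quaternionic pair sum to `ℓ`. -/
def QFam (G : Graph) {m : ℕ} (label : G.E → (Fin m → ℤ)) (lam : G.V → (Fin m → ℤ))
    (qpair : G.E → G.E) (v : G.V) (L : G.E → (Fin m → ℤ)) (ℓ : Fin m → ℤ) : Prop :=
  PM ℓ (lam v) ∧ ∀ e, G.src e = v → PM (L e) (label e) ∧ L e + L (qpair e) = ℓ

/-- A partial family `s` of lifts, together with a lift `ℓ` of the quaternionic weight
at `v`, is quaternionically compatible if it extends to a full family. -/
def QCompat (G : Graph) {m : ℕ} (label : G.E → (Fin m → ℤ)) (lam : G.V → (Fin m → ℤ))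
    (qpair : G.E → G.E) (v : G.V) (s : List (G.E × (Fin m → ℤ))) (ℓ : Fin m → ℤ) :
    Prop :=
  ∃ L, QFam G label lam qpair v L ℓ ∧ ∀ p ∈ s, L p.1 = p.2

/-- Condition (2) in the definition of a quaternionic structure on a GKM graph. -/
def QuatCondTwo (G : Graph) {m : ℕ} (label : G.E → (Fin m → ℤ))
    (lam : G.V → (Fin m → ℤ)) (qpair : G.E → G.E) : Prop :=
  ∃ C : Connection G, CompatibleConn G label C ∧
    (∀ e f, G.src f = G.src e → C.map e (qpair f) = qpair (C.map e f)) ∧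
    ∀ e xe lv, QCompat G label lam qpair (G.src e) [(e, xe)] lv →
      ∃ lw, (∃ c : ℤ, lw = lv + c • label e) ∧
        QCompat G label lam qpair (G.tgt e) [(G.bar e, -xe)] lw ∧
        ∀ f, G.src f = G.src e → ∀ xf,
          QCompat G label lam qpair (G.src e) [(e, xe), (f, xf)] lv →
          ∀ y, PM y (label (C.map e f)) → (∃ c : ℤ, y = xf + c • label e) →
            QCompat G label lam qpair (G.tgt e) [(G.bar e, -xe), (C.map e f, y)] lw

/-- A quaternionic structure on an abstract GKM graph: a quaternionic weight (mod sign)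
at every vertex, and a grouping of the edges at each vertex into quaternionic pairs,
subject to conditions (1) (`pair_sum`) and (2) (`cond₂`). -/
structure QuatStructure (G : Graph) {m : ℕ} (A : Axial G m) where
  lam : G.V → (Fin m → ℤ)
  qpair : G.E → G.E
  qpair_src : ∀ e, G.src (qpair e) = G.src e
  qpair_ne : ∀ e, qpair e ≠ e
  qpair_invol : ∀ e, qpair (qpair e) = e
  pair_sum : ∀ e, ∃ x y : Fin m → ℤ, PM x (A.label e) ∧ PM y (A.label (qpair e)) ∧
    PM (x + y) (lam (G.src e))
  cond₂ : QuatCondTwo G A.label lam qpair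

/-- Auxiliary function: consecutive pairs of edges of a connection path. -/
def connAux (G : Graph) (C : Connection G) (e₁ e₂ : G.E) : ℕ → G.E × G.E
  | 0 => (e₁, e₂)
  | n + 1 =>
    let p := connAux G C e₁ e₂ n
    (p.2, C.map p.2 (G.bar p.1))

/-- The connection path with prescribed first two edges `e₁, e₂` (where `t(e₁) = i(e₂)`):
`g 0 = e₁`, `g 1 = e₂`, `g (k+2) = ∇_{g (k+1)} (bar (g k))`. -/
def connPathFrom (G : Graph) (C : Connection G) (e₁ e₂ : G.E) (k : ℕ) : G.E :=
  (connAux G C e₁ e₂ k).1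

/-- The connection path through two edges `e, f` starting at the same vertex:
`g 0 = e`, `g 1 = ∇_e f`, `g (k+2) = ∇_{g (k+1)} (bar (g k))`. -/
def connPath (G : Graph) (C : Connection G) (e f : G.E) : ℕ → G.E :=
  connPathFrom G C e (C.map e f)

def IsPeriod {α : Type*} (g : ℕ → α) (N : ℕ) : Prop := 0 < N ∧ ∀ k, g (k + N) = g k

/-- `N` is the minimal period of the sequence `g`. -/
def MinPeriod {α : Type*} (g : ℕ → α) (N : ℕ) : Prop :=
  IsPeriod g N ∧ ∀ N', IsPeriod g N' → N ≤ N'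

/-- A 2-face (given by its connection path `g`) is quaternionic if at each of its
vertices the two edges of the face based there form a quaternionic pair. -/
def IsQuatPath (G : Graph) {m : ℕ} {A : Axial G m} (Q : QuatStructure G A)
    (g : ℕ → G.E) : Prop :=
  ∀ k, Q.qpair (g (k + 1)) = G.bar (g k)

/-- A noncomplex triangle: a quaternionic 2-face which is a triangle with labels
`±a, ±λ, ±(λ-a)` and quaternionic weights `±λ, ±(λ-a), ±a` at its three vertices. -/
def IsNoncomplexTriangle (G : Graph) {m : ℕ} {A : Axial G m} (Q : QuatStructure G A)
    (g : ℕ → G.E) : Prop :=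
  MinPeriod g 3 ∧ IsQuatPath G Q g ∧
  ∃ a l : Fin m → ℤ,
    PM (A.label (g 0)) a ∧ PM (A.label (g 1)) l ∧ PM (A.label (g 2)) (l - a) ∧
    PM (Q.lam (G.src (g 0))) l ∧ PM (Q.lam (G.src (g 1))) (l - a) ∧
    PM (Q.lam (G.src (g 2))) a

/-- Hypothesis (H): a GKM₃ graph with quaternionic structure all of whose quaternionic
2-faces are biangles or noncomplex triangles and all of whose complex 2-faces are
triangles or quadrangles. -/
def HypH (G : Graph) {m : ℕ} (A : Axial G m) (Q : QuatStructure G A) : Prop :=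
  A.IsGKM 3 ∧
  ∀ C : Connection G, CompatibleConn G A.label C →
    ∀ e f, G.src f = G.src e → f ≠ e →
      ∀ N, MinPeriod (connPath G C e f) N →
        (IsQuatPath G Q (connPath G C e f) →
          N = 2 ∨ IsNoncomplexTriangle G Q (connPath G C e f)) ∧
        (¬ IsQuatPath G Q (connPath G C e f) → N = 3 ∨ N = 4)

/-- A compatible signed structure on a 2-face with edges `g 0, …, g (N-1)`
(indices mod `N`): lifts `γ k` of the labels `α (g k)` such that consecutive lifts
satisfy the connection congruence and are quaternionically compatible at each vertex. -/
def SignedStructureOn (G : Graph) {m : ℕ} (A : Axial G m) (Q : QuatStructure G A)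
    (g : ℕ → G.E) (N : ℕ) (γ : ℕ → (Fin m → ℤ)) : Prop :=
  (∀ k, γ (k + N) = γ k) ∧
  (∀ k, PM (γ k) (A.label (g k))) ∧
  (∀ k, ∃ c : ℤ, γ (k + 2) + γ k = c • γ (k + 1)) ∧
  (∀ k, ∃ ℓ, QCompat G A.label Q.lam Q.qpair (G.tgt (g k))
      [(G.bar (g k), -(γ k)), (g (k + 1), γ (k + 1))] ℓ)

/-- The raw data of a GKM graph with quaternionic structure: vertices, oriented edges,
labels, quaternionic weights (both as chosen representatives mod sign) and quaternionic
pairs. -/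
structure QData (m : ℕ) where
  V : Type
  E : Type
  src : E → V
  bar : E → E
  label : E → (Fin m → ℤ)
  lam : V → (Fin m → ℤ)
  qpair : E → E

/-- The quaternionic GKM data underlying a GKM graph with quaternionic structure. -/
def toQData (G : Graph) {m : ℕ} (A : Axial G m) (Q : QuatStructure G A) : QData m :=
  ⟨G.V, G.E, G.src, G.bar, A.label, Q.lam, Q.qpair⟩

/-- An isomorphism of GKM graphs with quaternionic structure: bijections of vertices and
oriented edges commuting with `src`, `bar` and the quaternionic pairing, and preserving
the labels and the quaternionic weights up to sign. -/
structure QIso {m : ℕ} (D₁ D₂ : QData m) where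
  vmap : D₁.V ≃ D₂.V
  emap : D₁.E ≃ D₂.E
  src_comm : ∀ e, D₂.src (emap e) = vmap (D₁.src e)
  bar_comm : ∀ e, D₂.bar (emap e) = emap (D₁.bar e)
  label_pm : ∀ e, PM (D₂.label (emap e)) (D₁.label e)
  lam_pm : ∀ v, PM (D₂.lam (vmap v)) (D₁.lam v)
  qpair_comm : ∀ e, D₂.qpair (emap e) = emap (D₁.qpair e)

/-- The model graph `Γ_{ℍP}(λ; β₀, …, β_n)` of a torus action on `ℍPⁿ`: vertices
`0, …, n`, two edges between any two distinct vertices `k, l`, labeled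
`±(β_k - β_l)` and `±(λ - β_k - β_l)`, quaternionic weight `±(λ - 2β_k)` at `k`,
the two edges of each biangle forming a quaternionic pair. -/
def modelHP (n : ℕ) {m : ℕ} (lam₀ : Fin m → ℤ) (β : Fin (n + 1) → (Fin m → ℤ)) :
    QData m where
  V := Fin (n + 1)
  E := {p : Fin (n + 1) × Fin (n + 1) // p.1 ≠ p.2} × Bool
  src e := e.1.1.1
  bar e := (⟨(e.1.1.2, e.1.1.1), Ne.symm e.1.2⟩, e.2)
  label e := if e.2 then lam₀ - β e.1.1.1 - β e.1.1.2 else β e.1.1.1 - β e.1.1.2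
  lam k := lam₀ - (2 : ℤ) • β k
  qpair e := (e.1, !e.2)

/-- The 2-element subset `{i, j}` (`i ≠ j`) realized as a sorted pair. -/
def uPair {n : ℕ} (i j : Fin n) (h : i ≠ j) : {p : Fin n × Fin n // p.1 < p.2} :=
  if hlt : i < j then ⟨(i, j), hlt⟩ else ⟨(j, i), h.lt_or_gt.resolve_left hlt⟩

/-- The model graph `Γ_{Gr}(β₁, …, β_n)` of a torus action on `Gr₂(ℂⁿ)`: vertices the
2-element subsets of `{1, …, n}`; an oriented edge `(i, j, k)` from `{i, j}` to `{i, k}`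
for `j ≠ k`, labeled `±(β_j - β_k)`; quaternionic weight `±(β_i - β_j)` at `{i, j}`;
the edges `(i, j, k)` and `(j, i, k)` forming a quaternionic pair at `{i, j}`. -/
def modelGr (n : ℕ) {m : ℕ} (β : Fin n → (Fin m → ℤ)) : QData m where
  V := {p : Fin n × Fin n // p.1 < p.2}
  E := {t : Fin n × Fin n × Fin n // t.1 ≠ t.2.1 ∧ t.1 ≠ t.2.2 ∧ t.2.1 ≠ t.2.2}
  src e := uPair e.1.1 e.1.2.1 e.2.1
  bar e := ⟨(e.1.1, e.1.2.2, e.1.2.1), e.2.2.1, e.2.1, Ne.symm e.2.2.2⟩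
  label e := β e.1.2.1 - β e.1.2.2
  lam v := β v.1.1 - β v.1.2
  qpair e := ⟨(e.1.2.1, e.1.1, e.1.2.2), Ne.symm e.2.1, e.2.2.2, e.2.2.1⟩

/-- A subgraph (with quaternionic structure) of a GKM graph with quaternionic
structure: sets of vertices and of oriented edges closed under `src`, `bar` and the
quaternionic pairing. -/
structure SubData (G : Graph) {m : ℕ} (A : Axial G m) (Q : QuatStructure G A) where
  W : Set G.V
  F : Set G.E
  src_mem : ∀ e ∈ F, G.src e ∈ W
  bar_mem : ∀ e ∈ F, G.bar e ∈ F
  qpair_mem : ∀ e ∈ F, Q.qpair e ∈ F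

/-- The quaternionic GKM data induced on a subgraph. -/
def SubData.toQData {G : Graph} {m : ℕ} {A : Axial G m} {Q : QuatStructure G A}
    (S : SubData G A Q) : QData m where
  V := S.W
  E := S.F
  src e := ⟨G.src e.1, S.src_mem e.1 e.2⟩
  bar e := ⟨G.bar e.1, S.bar_mem e.1 e.2⟩
  label e := A.label e.1
  lam v := Q.lam v.1
  qpair e := ⟨Q.qpair e.1, S.qpair_mem e.1 e.2⟩

/-!
Let `g` be a complex hexagon with signed structure `γₖ₊₂ = γₖ₊₁ - γₖ`, and let `ℓₖ` be the
compatible lift of the quaternionic weight at the vertex `t(gₖ)`. By GKM₃, `γₖ, γₖ₊₁, ℓₖ` are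
independent. Transport along `gₖ₊₁` gives `ℓₖ₊₁ = ℓₖ + cₖ γₖ₊₁`, where `cₖ = -2` or `-1` as the
quaternionic face through `gₖ₊₁` is a biangle or a noncomplex triangle. The complex face through
`gₖ₊₁` and the partner of `ḡₖ` is then a triangle: closing up a signed structure on a quadrangle or
hexagon there would force `cₖ ∈ {1, 2}`. Its third edge `u` at `t(gₖ)` has label
`±(ℓₖ + γₖ + j γₖ₊₁)` with `j ≠ 0`, which forces the lift `-(ℓₖ + γₖ + j γₖ₊₁)` of `u`, so that
transport along `u` yields a weight with `ℓₖ`-coordinate `2` or `3`. But the quaternionic face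
through `gₖ₊₂` shows that the weight at the end of `u` has `ℓₖ`-coordinate `0` or `±1`.
-/

section Signs

variable {m : ℕ} {x y z : Fin m → ℤ}

theorem PM.symm (h : PM x y) : PM y x := by
  rcases h with rfl | rfl
  · exact Or.inl rfl
  · exact Or.inr (neg_neg y).symm

theorem PM.trans (h₁ : PM x y) (h₂ : PM y z) : PM x z := by
  rcases h₂ with rfl | rfl
  · exact h₁
  · rcases h₁ with rfl | rfl
    · exact Or.inr rfl
    · exact Or.inl (neg_neg z)

theorem PM.neg_left (h : PM x y) : PM (-x) y := by
  rcases h with rfl | rfl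
  · exact Or.inr rfl
  · exact Or.inl (neg_neg y)

theorem PM.sign_smul {η : ℤ} (hη : η = 1 ∨ η = -1) (h : PM x y) : PM (η • x) y := by
  rcases hη with rfl | rfl
  · simpa using h
  · simpa using h.neg_left

theorem PM.exists_sign (h : PM x y) : ∃ s : ℤ, (s = 1 ∨ s = -1) ∧ x = s • y := by
  rcases h with rfl | rfl
  · exact ⟨1, Or.inl rfl, (one_smul ℤ x).symm⟩
  · exact ⟨-1, Or.inr rfl, (neg_one_smul ℤ y).symm⟩

end Signs

section IntIndependence

variable {m : ℕ} {x y z : Fin m → ℤ}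

theorem eq_of_linearIndependent_pair (h : LinearIndependent ℤ ![x, y]) {a b a' b' : ℤ}
    (heq : a • x + b • y = a' • x + b' • y) : a = a' ∧ b = b' := by
  have := LinearIndependent.pair_iff.mp h (a - a') (b - b')
    (by rw [sub_smul, sub_smul]; linear_combination (norm := module) heq)
  omega

theorem eq_of_linearIndependent_triple (h : LinearIndependent ℤ ![x, y, z]) {a b c a' b' c' : ℤ}
    (heq : a • x + b • y + c • z = a' • x + b' • y + c' • z) : a = a' ∧ b = b' ∧ c = c' := by
  have h0 := Fintype.linearIndependent_iff.mp h ![a - a', b - b', c - c']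
    (by simp only [Fin.sum_univ_three, Matrix.cons_val]; linear_combination (norm := module) heq)
  exact ⟨sub_eq_zero.mp (h0 0), sub_eq_zero.mp (h0 1), sub_eq_zero.mp (h0 2)⟩

theorem coeff_eq_of_pm (h : LinearIndependent ℤ ![x, y]) {a b : ℤ}
    (hpm : PM (y + a • x) (y + b • x)) : a = b := by
  rcases hpm with hpm | hpm
  · exact (eq_of_linearIndependent_pair h (b := 1) (b' := 1)
      (by linear_combination (norm := module) hpm)).1
  · have := eq_of_linearIndependent_pair h (a := a) (b := 1) (a' := -b) (b' := -1)
      (by linear_combination (norm := module) hpm)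
    omega

theorem linearIndependent_int_of_ratQ {ι : Type*} {v : ι → Fin m → ℤ}
    (h : LinearIndependent ℚ fun i => ratQ (v i)) : LinearIndependent ℤ v :=
  LinearIndependent.of_comp ((Int.castAddHom ℚ).toIntLinearMap.compLeft (Fin m))
    (h.restrict_scalars' ℤ)

end IntIndependence


section Labels

variable {G : Graph} {m : ℕ} (A : Axial G m)

theorem Axial.linearIndependent_label_pair {e f : G.E} (hf : G.src f = G.src e) (hne : e ≠ f) :
    LinearIndependent ℤ ![A.label e, A.label f] := by
  refine linearIndependent_int_of_ratQ ?_
  convert A.indep₂ e f hf hne using 1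
  ext i : 1
  fin_cases i <;> rfl

variable {A}

theorem Axial.IsGKM.linearIndependent_label_triple (h₃ : A.IsGKM 3) {e₁ e₂ e₃ : G.E}
    (hsrc₂ : G.src e₂ = G.src e₁) (hsrc₃ : G.src e₃ = G.src e₁)
    (h₁₂ : e₁ ≠ e₂) (h₁₃ : e₁ ≠ e₃) (h₂₃ : e₂ ≠ e₃) :
    LinearIndependent ℤ ![A.label e₁, A.label e₂, A.label e₃] := by
  classical
  let s : Finset G.E := {e₁, e₂, e₃}
  have hs : ∀ e ∈ s, G.src e = G.src e₁ := by
    simp only [s, Finset.mem_insert, Finset.mem_singleton]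
    rintro e (rfl | rfl | rfl) <;> first | rfl | assumption
  have hcard : s.card = 3 := by simp [s, Finset.card_insert_of_notMem, *]
  let f : Fin 3 → s := fun i => ⟨![e₁, e₂, e₃] i, by fin_cases i <;> simp [s]⟩
  have hf : Function.Injective f := by
    intro i j hij
    have := congrArg Subtype.val hij
    fin_cases i <;> fin_cases j <;> simp only [f] at this <;>
      first | rfl | exact absurd this ‹_› | exact absurd this.symm ‹_›
  refine linearIndependent_int_of_ratQ ?_
  convert (h₃ (G.src e₁) s hs hcard).comp f hf using 1
  ext i : 1
  fin_cases i <;> rfl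

theorem Axial.IsGKM.eq_or_eq_of_linear_relation (h₃ : A.IsGKM 3) {e₁ e₂ r : G.E}
    (hsrc₂ : G.src e₂ = G.src e₁) (hsrc : G.src r = G.src e₁) (hne : e₁ ≠ e₂) {a b c : ℤ}
    (hc : c ≠ 0) (h : a • A.label e₁ + b • A.label e₂ + c • A.label r = 0) : r = e₁ ∨ r = e₂ := by
  by_contra! hr
  have := eq_of_linearIndependent_triple
    (h₃.linearIndependent_label_triple hsrc₂ hsrc hne (Ne.symm hr.1) (Ne.symm hr.2))
    (a' := 0) (b' := 0) (c' := 0) (by rw [h]; module)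
  omega

end Labels


section ConnectionPaths

variable {G : Graph} (C : Connection G)

theorem Graph.src_bar (e : G.E) : G.src (G.bar e) = G.tgt e := rfl

theorem Graph.tgt_bar (e : G.E) : G.tgt (G.bar e) = G.src e := by
  rw [Graph.tgt, G.bar_invol]

theorem Connection.map_injOn {e f₁ f₂ : G.E} (h₁ : G.src f₁ = G.src e) (h₂ : G.src f₂ = G.src e)
    (h : C.map e f₁ = C.map e f₂) : f₁ = f₂ := by
  rw [← C.map_bar e f₁ h₁, h, C.map_bar e f₂ h₂]

theorem connPath_one (e f : G.E) : connPath G C e f 1 = C.map e f := rfl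

theorem connPath_add_two (e f : G.E) (k : ℕ) :
    connPath G C e f (k + 2) = C.map (connPath G C e f (k + 1)) (G.bar (connPath G C e f k)) :=
  rfl

theorem src_connPath_succ {e f : G.E} (hf : G.src f = G.src e) (k : ℕ) :
    G.src (connPath G C e f (k + 1)) = G.tgt (connPath G C e f k) := by
  induction k with
  | zero => exact C.map_src e f hf
  | succ k ih => exact C.map_src _ _ ih.symm

theorem exists_minPeriod_of_isPeriod {α : Type*} {g : ℕ → α} {N : ℕ} (h : IsPeriod g N) :
    ∃ N, MinPeriod g N := by
  classical
  exact ⟨Nat.find ⟨N, h⟩, Nat.find_spec ⟨N, h⟩, fun _ hN' => Nat.find_min' _ hN'⟩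

/-- The step `(gₖ, gₖ₊₁) ↦ (gₖ₊₁, gₖ₊₂)` of a connection path is injective (`∇` is invertible),
so on the finite set of pairs of consecutive edges every orbit is periodic. -/
theorem exists_minPeriod_connPath {e f : G.E} (hf : G.src f = G.src e) :
    ∃ N, MinPeriod (connPath G C e f) N := by
  have := G.fintypeE
  let S := {p : G.E × G.E // G.src p.2 = G.tgt p.1}
  let step : S → S := fun p => ⟨(p.1.2, C.map p.1.2 (G.bar p.1.1)), C.map_src _ _ p.2.symm⟩
  have hstep : Function.Injective step := by
    rintro ⟨⟨a, b⟩, hab⟩ ⟨⟨a', b'⟩, hab'⟩ h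
    have hb : b = b' := congrArg (fun p : S => p.1.1) h
    subst hb
    have ha := C.map_injOn hab.symm hab'.symm (congrArg (fun p : S => p.1.2) h)
    have ha' : a = a' := by rw [← G.bar_invol a, ha, G.bar_invol]
    subst ha'
    rfl
  let p₀ : S := ⟨(e, C.map e f), C.map_src e f hf⟩
  have hiter : ∀ k, connPath G C e f k = (step^[k] p₀).1.1 := by
    suffices ∀ k, connAux G C e (C.map e f) k = (step^[k] p₀).1 from
      fun k => congrArg Prod.fst (this k)
    intro k
    induction k with
    | zero => rfl
    | succ k ih => rw [Function.iterate_succ_apply', connAux, ih]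
  obtain ⟨N, hN, hper⟩ := Function.mem_periodicPts.mp (hstep.mem_periodicPts p₀)
  exact exists_minPeriod_of_isPeriod
    ⟨hN, fun k => by rw [hiter, hiter, Function.iterate_add_apply, hper.eq]⟩

theorem forall_of_periodic_of_succ {P : ℕ → Prop} {N : ℕ} (hN : 0 < N)
    (hper : ∀ k, P (k + N) → P k) (hsucc : ∀ k, P k → P (k + 1)) {k₀ : ℕ} (h₀ : P k₀) (k : ℕ) :
    P k := by
  have hup : ∀ n, P (k₀ + n) := fun n => Nat.rec h₀ (fun n ih => hsucc _ ih) n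
  have hdown : ∀ t, P (k + N * t) → P k := by
    intro t
    induction t with
    | zero => exact id
    | succ t ih => exact fun h => ih (hper _ (by rwa [Nat.mul_succ, ← add_assoc] at h))
  have hk₀ : k₀ ≤ N * k₀ := Nat.le_mul_of_pos_left k₀ hN
  have h := hup (k + N * k₀ - k₀)
  rw [show k₀ + (k + N * k₀ - k₀) = k + N * k₀ by omega] at h
  exact hdown k₀ h

end ConnectionPaths


section Uniqueness

variable {G : Graph} {m : ℕ} {A : Axial G m}

theorem Connection.map_eq_of_compatible (h₃ : A.IsGKM 3) {C C' : Connection G}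
    (hC : CompatibleConn G A.label C) (hC' : CompatibleConn G A.label C') {x y : G.E}
    (hy : G.src y = G.src x) : C.map x y = C'.map x y := by
  rcases eq_or_ne y x with rfl | hyx
  · rw [C.map_self, C'.map_self]
  -- `∇_x y = ∇'_x y'`, so compatibility of both connections makes `label y` an integral
  -- combination of `label x` and `label y'`
  set y' := C'.map (G.bar x) (C.map x y)
  have hxy : G.src (C.map x y) = G.src (G.bar x) := C.map_src x y hy
  have hy' : G.src y' = G.src x := by rw [C'.map_src _ _ hxy, Graph.tgt_bar]
  have hmap : C'.map x y' = C.map x y := by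
    simpa only [G.bar_invol] using C'.map_bar (G.bar x) (C.map x y) hxy
  suffices y' = y by rw [← hmap, this]
  by_contra hne
  have hy'x : x ≠ y' := by
    intro h
    rw [← h, C'.map_self, ← C.map_self] at hmap
    exact hyx (C.map_injOn rfl hy hmap).symm
  obtain ⟨a, b, ha, hb, c, rfl⟩ := hC x y hy
  obtain ⟨a', b', ha', hb', c', rfl⟩ := hC' x y' hy'
  rw [hmap] at hb'
  obtain ⟨s, hs, ha⟩ := ha.exists_sign
  obtain ⟨s', -, ha'⟩ := ha'.exists_sign
  obtain ⟨t, -, hb⟩ := (hb.trans hb'.symm).exists_sign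
  rcases h₃.eq_or_eq_of_linear_relation hy' hy hy'x (a := c - t * c') (b := -(t * s'))
        (c := s) (by omega)
      (by rw [← ha]; rw [ha'] at hb; linear_combination (norm := module) hb)
    with h | h
  · exact hyx h
  · exact hne h.symm

theorem connPath_eq_of_compatible (h₃ : A.IsGKM 3) {C C' : Connection G}
    (hC : CompatibleConn G A.label C) (hC' : CompatibleConn G A.label C') {e f : G.E}
    (hf : G.src f = G.src e) : connPath G C e f = connPath G C' e f := by
  have key : ∀ k, connPath G C e f k = connPath G C' e f k ∧
      connPath G C e f (k + 1) = connPath G C' e f (k + 1) := by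
    intro k
    induction k with
    | zero => exact ⟨rfl, Connection.map_eq_of_compatible h₃ hC hC' hf⟩
    | succ k ih =>
      refine ⟨ih.2, ?_⟩
      rw [connPath_add_two, connPath_add_two, ← ih.1, ← ih.2]
      exact Connection.map_eq_of_compatible h₃ hC hC' (src_connPath_succ C hf k).symm
  exact funext fun k => (key k).1

end Uniqueness


section QuaternionicFamilies

variable {G : Graph} {m : ℕ} {A : Axial G m} (Q : QuatStructure G A)
  {v : G.V} {L M : G.E → (Fin m → ℤ)} {ℓ ℓ' : Fin m → ℤ}

theorem QFam.apply_qpair (hL : QFam G A.label Q.lam Q.qpair v L ℓ) {e : G.E}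
    (he : G.src e = v) : L (Q.qpair e) = ℓ - L e := by
  rw [← (hL.2 e he).2]
  abel

theorem QFam.sign_smul (hL : QFam G A.label Q.lam Q.qpair v L ℓ) {η : ℤ} (hη : η = 1 ∨ η = -1) :
    QFam G A.label Q.lam Q.qpair v (η • L) (η • ℓ) :=
  ⟨hL.1.sign_smul hη, fun e he => ⟨(hL.2 e he).1.sign_smul hη, by
    rw [Pi.smul_apply, Pi.smul_apply, ← smul_add, (hL.2 e he).2]⟩⟩

theorem QFam.linearIndependent (hL : QFam G A.label Q.lam Q.qpair v L ℓ) {e : G.E}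
    (he : G.src e = v) : LinearIndependent ℤ ![L e, ℓ] := by
  have hlabels := A.linearIndependent_label_pair (Q.qpair_src e) (Q.qpair_ne e).symm
  rw [← (hL.2 e he).2, LinearIndependent.pair_add_right_iff]
  rcases (hL.2 e he).1 with h | h <;>
    rcases (hL.2 (Q.qpair e) ((Q.qpair_src e).trans he)).1 with h' | h' <;>
    simpa [h, h'] using hlabels

theorem QFam.weight_eq (hL : QFam G A.label Q.lam Q.qpair v L ℓ)
    (hM : QFam G A.label Q.lam Q.qpair v M ℓ') {e : G.E} (he : G.src e = v) (h : M e = L e) :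
    ℓ' = ℓ := by
  have hind := hL.linearIndependent Q he
  have hq := hM.apply_qpair Q he
  rw [h] at hq
  rcases (hM.2 (Q.qpair e) ((Q.qpair_src e).trans he)).1.trans
      (hL.2 (Q.qpair e) ((Q.qpair_src e).trans he)).1.symm with h₁ | h₁ <;>
    rw [hq, hL.apply_qpair Q he] at h₁
  · exact sub_left_inj.mp h₁
  · rcases hM.1.trans hL.1.symm with h₂ | h₂
    · exact h₂
    · have := eq_of_linearIndependent_pair hind (a := 2) (b := 0) (a' := 0) (b' := 0)
        (by rw [h₂] at h₁; linear_combination (norm := module) -h₁)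
      omega

theorem QFam.eq_coeffs (h₃ : A.IsGKM 3) (hL : QFam G A.label Q.lam Q.qpair v L ℓ) {e f : G.E}
    (he : G.src e = v) (hf : G.src f = v) (hef : e ≠ f) (hfq : f ≠ Q.qpair e) {a b c a' b' c' : ℤ}
    (h : a • L e + b • L f + c • ℓ = a' • L e + b' • L f + c' • ℓ) :
    a = a' ∧ b = b' ∧ c = c' := by
  have hq : G.src (Q.qpair e) = v := (Q.qpair_src e).trans he
  obtain ⟨s₁, hs₁, h₁⟩ := (hL.2 e he).1.exists_sign
  obtain ⟨s₂, hs₂, h₂⟩ := (hL.2 f hf).1.exists_sign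
  obtain ⟨s₃, hs₃, hqe⟩ := (hL.2 _ hq).1.exists_sign
  have hℓ : ℓ = s₁ • A.label e + s₃ • A.label (Q.qpair e) := by
    rw [← (hL.2 e he).2, h₁, hqe]
  rw [hℓ, h₁, h₂] at h
  have := eq_of_linearIndependent_triple
    (h₃.linearIndependent_label_triple (hf.trans he.symm) (hq.trans he.symm) hef
      (Q.qpair_ne e).symm hfq)
    (a := (a + c) * s₁) (b := b * s₂) (c := c * s₃)
    (a' := (a' + c') * s₁) (b' := b' * s₂) (c' := c' * s₃)
    (by linear_combination (norm := module) h)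
  rcases hs₁ with rfl | rfl <;> rcases hs₂ with rfl | rfl <;> rcases hs₃ with rfl | rfl <;> omega

theorem QFam.exists_transport (hL : QFam G A.label Q.lam Q.qpair v L ℓ) {u : G.E}
    (hu : G.src u = v) :
    ∃ M ℓ', QFam G A.label Q.lam Q.qpair (G.tgt u) M ℓ' ∧ M (G.bar u) = -L u ∧
      ∃ c : ℤ, ℓ' = ℓ + c • A.label u := by
  obtain ⟨C, -, -, htransport⟩ := Q.cond₂
  subst hu
  obtain ⟨ℓ', hc, ⟨M, hM, hMu⟩, -⟩ := htransport u (L u) ℓ ⟨L, hL, by simp⟩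
  exact ⟨M, ℓ', hM, hMu _ (List.mem_singleton_self _), hc⟩

end QuaternionicFamilies


section QuaternionicFaces

variable {G : Graph} {m : ℕ} {A : Axial G m} (Q : QuatStructure G A) (C : Connection G)

def Connection.PreservesQPairs : Prop :=
  ∀ e f, G.src f = G.src e → C.map e (Q.qpair f) = Q.qpair (C.map e f)

def QuatFacesBiangleOrTriangle : Prop :=
  ∀ e f, G.src f = G.src e → f ≠ e → ∀ N, MinPeriod (connPath G C e f) N →
    IsQuatPath G Q (connPath G C e f) → N = 2 ∨ IsNoncomplexTriangle G Q (connPath G C e f)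

def ComplexFacesTriangleQuadrangleHexagon : Prop :=
  ∀ e f, G.src f = G.src e → f ≠ e → ∀ N, MinPeriod (connPath G C e f) N →
    ¬ IsQuatPath G Q (connPath G C e f) →
      N = 3 ∨
      (N = 4 ∧ ∃ γ, SignedStructureOn G A Q (connPath G C e f) 4 γ ∧
        ∀ k, γ (k + 2) = -(γ k)) ∨
      (N = 6 ∧ ∃ γ, SignedStructureOn G A Q (connPath G C e f) 6 γ ∧
        ∀ k, γ (k + 2) = γ (k + 1) - γ k)

variable {Q C}

theorem qpair_connPath_add_two (hpair : C.PreservesQPairs Q) {e f : G.E} (k : ℕ)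
    (h : Q.qpair (connPath G C e f (k + 1)) = G.bar (connPath G C e f k)) :
    Q.qpair (connPath G C e f (k + 2)) = G.bar (connPath G C e f (k + 1)) := by
  rw [connPath_add_two, ← h, hpair _ _ rfl, C.map_self, Q.qpair_invol]

theorem isQuatPath_connPath_qpair (hpair : C.PreservesQPairs Q) (u : G.E) :
    IsQuatPath G Q (connPath G C u (Q.qpair u)) := by
  intro k
  induction k with
  | zero => rw [connPath_one, hpair _ _ rfl, C.map_self, Q.qpair_invol]; rfl
  | succ k ih => exact qpair_connPath_add_two hpair k ih

theorem qpair_bar_eq_of_biangle (hpair : C.PreservesQPairs Q) {u : G.E}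
    (h2 : MinPeriod (connPath G C u (Q.qpair u)) 2) :
    Q.qpair (G.bar u) = G.bar (Q.qpair u) := by
  have h := isQuatPath_connPath_qpair hpair u 1
  rw [h2.1.2 0, connPath_one, hpair _ _ rfl, C.map_self] at h
  exact (congrArg G.bar h).trans (G.bar_invol _) |>.symm

theorem pm_of_noncomplexTriangle (hpair : C.PreservesQPairs Q) {u : G.E}
    (hT : IsNoncomplexTriangle G Q (connPath G C u (Q.qpair u))) :
    PM (A.label (Q.qpair (G.bar u))) (Q.lam (G.src u)) ∧
      PM (Q.lam (G.tgt (Q.qpair u))) (A.label u) := by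
  obtain ⟨hmin, hquat, a, l, ha, hl, -, hlam₀, -, hlam₂⟩ := hT
  have h₁ : connPath G C u (Q.qpair u) 1 = Q.qpair (G.bar u) := by
    rw [connPath_one, hpair _ _ rfl, C.map_self]
  have h₂ : connPath G C u (Q.qpair u) 2 = G.bar (Q.qpair u) := by
    have := hquat 2
    rw [hmin.1.2 0] at this
    rw [← G.bar_invol (connPath G C u (Q.qpair u) 2), ← this]; rfl
  rw [h₁] at hl
  rw [h₂, Graph.src_bar] at hlam₂
  exact ⟨hl.trans hlam₀.symm, hlam₂.trans ha.symm⟩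

end QuaternionicFaces


section WeightTransport

variable {G : Graph} {m : ℕ} {A : Axial G m} {Q : QuatStructure G A} {C : Connection G}
  {u : G.E} {L M : G.E → (Fin m → ℤ)} {ℓ ℓ' : Fin m → ℤ}

/-- Transport along `u` changes the lift `ℓ` of the quaternionic weight by `-2 • L u` if the
quaternionic 2-face through `u` is a biangle and by `-L u` if it is a noncomplex triangle. -/
theorem QFam.transport_eq_of_quatFaces (hquat : QuatFacesBiangleOrTriangle Q C)
    (hpair : C.PreservesQPairs Q) (hL : QFam G A.label Q.lam Q.qpair (G.src u) L ℓ)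
    (hM : QFam G A.label Q.lam Q.qpair (G.tgt u) M ℓ') (hMu : M (G.bar u) = -L u) :
    (ℓ' = ℓ - 2 • L u ∧ PM (Q.lam (G.tgt (Q.qpair u))) ℓ') ∨
      (ℓ' = ℓ - L u ∧ PM (Q.lam (G.tgt (Q.qpair u))) (L u)) := by
  obtain ⟨M₀, ℓ₀, hM₀, hM₀u, c, hc⟩ := hL.exists_transport Q rfl
  obtain rfl : ℓ' = ℓ₀ := hM₀.weight_eq Q hM rfl (hMu.trans hM₀u.symm)
  obtain ⟨s, -, hs⟩ := (hL.2 u rfl).1.symm.exists_sign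
  replace hc : ℓ' = ℓ + (c * s) • L u := by rw [hc, hs, smul_smul]
  have hind := hL.linearIndependent Q (e := u) rfl
  have hqbar : PM (ℓ + (c * s + 1) • L u) (A.label (Q.qpair (G.bar u))) := by
    have h := (hM.2 (Q.qpair (G.bar u)) (Q.qpair_src _)).1
    rw [hM.apply_qpair Q rfl, hMu, hc] at h
    convert h using 1
    module
  obtain ⟨N, hN⟩ := exists_minPeriod_connPath C (Q.qpair_src u)
  rcases hquat u (Q.qpair u) (Q.qpair_src u) (Q.qpair_ne u) N hN
    (isQuatPath_connPath_qpair hpair u) with rfl | hT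
  · have hpm : PM (ℓ + (c * s + 1) • L u) (ℓ + (-1 : ℤ) • L u) := by
      have h := (hL.2 (Q.qpair u) (Q.qpair_src u)).1
      rw [hL.apply_qpair Q rfl] at h
      rw [neg_one_smul, ← sub_eq_add_neg]
      exact hqbar.trans ((qpair_bar_eq_of_biangle hpair hN ▸ A.label_bar _).trans h.symm)
    have hcs : c * s = -2 := by linarith [coeff_eq_of_pm hind hpm]
    refine Or.inl ⟨by rw [hc, hcs]; module, ?_⟩
    have htgt : G.tgt (Q.qpair u) = G.tgt u :=
      (congrArg G.src (qpair_bar_eq_of_biangle hpair hN).symm).trans (Q.qpair_src _)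
    exact htgt ▸ hM.1.symm
  · obtain ⟨hlabel, hlam⟩ := pm_of_noncomplexTriangle hpair hT
    have hpm : PM (ℓ + (c * s + 1) • L u) (ℓ + (0 : ℤ) • L u) := by
      rw [zero_smul, add_zero]
      exact hqbar.trans (hlabel.trans hL.1.symm)
    have hcs : c * s = -1 := by linarith [coeff_eq_of_pm hind hpm]
    exact Or.inr ⟨by rw [hc, hcs]; module, hlam.trans (hL.2 u rfl).1.symm⟩

end WeightTransport


section ComplexFaces

variable {G : Graph} {m : ℕ} {A : Axial G m} {Q : QuatStructure G A} {C : Connection G}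

theorem label_connPath_two_of_triangle (hC : CompatibleConn G A.label C) {e f : G.E}
    (hf : G.src f = G.src e) (hfe : f ≠ e) (h3 : connPath G C e f 3 = e) :
    ∃ σ : ℤ, (σ = 1 ∨ σ = -1) ∧
      PM (A.label (connPath G C e f 2)) (A.label e + σ • A.label (connPath G C e f 1)) := by
  set D := connPath G C e f
  have hsrc₁ : G.src (D 1) = G.tgt e := C.map_src e f hf
  have hsrc₂ : G.src (D 2) = G.tgt (D 1) := src_connPath_succ C hf 1
  have hne : G.bar e ≠ D 1 := by
    rw [← C.map_self]
    exact fun h => hfe (C.map_injOn hf rfl h.symm)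
  have hind : LinearIndependent ℤ ![A.label e, A.label (D 1)] := by
    have := A.linearIndependent_label_pair hsrc₁ hne
    rcases A.label_bar e with h | h <;> simpa [h] using this
  obtain ⟨x, y, hx, hy, c₁, rfl⟩ := hC (D 1) (G.bar e) hsrc₁.symm
  obtain ⟨x', y', hx', hy', c₂, rfl⟩ := hC (D 2) (G.bar (D 1)) hsrc₂.symm
  obtain ⟨s₁, hs₁, rfl⟩ := (hx.trans (A.label_bar e)).exists_sign
  obtain ⟨s₂, hs₂, rfl⟩ := (hx'.trans (A.label_bar (D 1))).exists_sign
  obtain ⟨t₁, ht₁, ht₁'⟩ := hy.symm.exists_sign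
  obtain ⟨t₂, ht₂, ht₂'⟩ := hy'.exists_sign
  have h3' : C.map (D 2) (G.bar (D 1)) = e := h3
  have hD2 : A.label (D 2) = t₁ • (s₁ • A.label e + c₁ • A.label (D 1)) := ht₁'
  rw [h3', hD2] at ht₂'
  obtain ⟨-, hcoef⟩ := eq_of_linearIndependent_pair hind (a := c₂ * t₁ * s₁)
    (b := s₂ + c₂ * t₁ * c₁) (a' := t₂) (b' := 0) (by linear_combination (norm := module) ht₂')
  have hc₁ : c₁ = 1 ∨ c₁ = -1 := by
    refine Int.eq_one_or_neg_one_of_mul_eq_one (v := -(c₂ * t₁ * s₂)) ?_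
    rcases hs₂ with rfl | rfl
    · linear_combination -hcoef
    · linear_combination hcoef
  refine ⟨s₁ * c₁, by rcases hs₁ with rfl | rfl <;> rcases hc₁ with rfl | rfl <;> simp, ?_⟩
  have hsign : t₁ * s₁ = 1 ∨ t₁ * s₁ = -1 := by
    rcases hs₁ with rfl | rfl <;> rcases ht₁ with rfl | rfl <;> simp
  convert (PM.sign_smul hsign (Or.inl rfl) : PM _ (A.label e + (s₁ * c₁) • A.label (D 1))) using 1
  rw [hD2]
  rcases hs₁ with rfl | rfl <;> module

theorem SignedStructureOn.exists_qcompat_last {e f : G.E} (hf : G.src f = G.src e) {N : ℕ}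
    (hN : IsPeriod (connPath G C e f) N) {δ : ℕ → (Fin m → ℤ)}
    (hδ : SignedStructureOn G A Q (connPath G C e f) N δ) {a : ℤ}
    (hrec : ∀ j, δ (j + 2) = a • δ (j + 1) - δ j) :
    ∃ b ℓ₀, G.src b = G.src e ∧
      QCompat G A.label Q.lam Q.qpair (G.src e) [(b, δ 1 - a • δ 0), (e, δ 0)] ℓ₀ := by
  obtain ⟨n, rfl⟩ := Nat.exists_eq_succ_of_ne_zero hN.1.ne'
  have hlast : connPath G C e f (n + 1) = e := (zero_add (n + 1)) ▸ hN.2 0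
  have hδ₀ : δ (n + 1) = δ 0 := by simpa using hδ.1 0
  have hδ₁ : δ (n + 2) = δ 1 := by rw [← hδ.1 1, Nat.succ_eq_add_one, add_comm 1 (n + 1)]
  have htgt : G.tgt (connPath G C e f n) = G.src e := by
    rw [← src_connPath_succ C hf n, hlast]
  obtain ⟨ℓ₀, hℓ₀⟩ := hδ.2.2.2 n
  rw [htgt, hlast, hδ₀] at hℓ₀
  have hδn : -δ n = δ 1 - a • δ 0 := by rw [← hδ₁, hrec n, hδ₀]; abel
  exact ⟨_, ℓ₀, htgt, hδn ▸ hℓ₀⟩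

end ComplexFaces


section Hexagon

variable {G : Graph} {m : ℕ}

/-- What the argument uses of a complex hexagon `g` with signed structure `γ`: conditions local
to the vertices `t(gₖ)` (periodicity is not recorded), where `L k` is a quaternionically
compatible family of lifts extending `-γ k, γ (k + 1)`, with weight `ℓ k`. -/
structure ComplexHexagonData (A : Axial G m) (Q : QuatStructure G A) (C : Connection G) where
  g : ℕ → G.E
  γ : ℕ → (Fin m → ℤ)
  L : ℕ → G.E → (Fin m → ℤ)
  ℓ : ℕ → (Fin m → ℤ)
  src_succ : ∀ k, G.src (g (k + 1)) = G.tgt (g k)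
  map_bar : ∀ k, C.map (g (k + 1)) (G.bar (g k)) = g (k + 2)
  bar_ne : ∀ k, G.bar (g k) ≠ g (k + 1)
  qpair_ne : ∀ k, Q.qpair (g (k + 1)) ≠ G.bar (g k)
  γ_add_two : ∀ k, γ (k + 2) = γ (k + 1) - γ k
  qfam : ∀ k, QFam G A.label Q.lam Q.qpair (G.tgt (g k)) (L k) (ℓ k)
  L_bar : ∀ k, L k (G.bar (g k)) = -γ k
  L_succ : ∀ k, L k (g (k + 1)) = γ (k + 1)

variable {A : Axial G m} {Q : QuatStructure G A} {C : Connection G}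

namespace ComplexHexagonData

variable (H : ComplexHexagonData A Q C)

theorem eq_coeffs (h₃ : A.IsGKM 3) (k : ℕ) {a b c a' b' c' : ℤ}
    (h : a • H.γ k + b • H.γ (k + 1) + c • H.ℓ k = a' • H.γ k + b' • H.γ (k + 1) + c' • H.ℓ k) :
    a = a' ∧ b = b' ∧ c = c' := by
  have := (H.qfam k).eq_coeffs Q h₃ rfl (H.src_succ k) (H.bar_ne k)
    (fun h => H.qpair_ne k (by rw [h, Q.qpair_invol]))
    (a := -a) (b := b) (c := c) (a' := -a') (b' := b') (c' := c')
    (by rw [H.L_bar, H.L_succ]; linear_combination (norm := module) h)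
  omega

theorem pm_label_succ (k : ℕ) : PM (H.γ (k + 1)) (A.label (H.g (k + 1))) :=
  H.L_succ k ▸ ((H.qfam k).2 _ (H.src_succ k)).1

theorem weight_succ (hquat : QuatFacesBiangleOrTriangle Q C) (hpair : C.PreservesQPairs Q)
    (k : ℕ) :
    (H.ℓ (k + 1) = H.ℓ k - 2 • H.γ (k + 1) ∧
        PM (Q.lam (G.tgt (Q.qpair (H.g (k + 1))))) (H.ℓ (k + 1))) ∨
      (H.ℓ (k + 1) = H.ℓ k - H.γ (k + 1) ∧
        PM (Q.lam (G.tgt (Q.qpair (H.g (k + 1))))) (H.γ (k + 1))) := by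
  have hL := H.qfam k
  rw [← H.src_succ k] at hL
  have := hL.transport_eq_of_quatFaces hquat hpair (H.qfam (k + 1))
    (by rw [H.L_bar, H.L_succ])
  rwa [H.L_succ] at this

/-- At `t(gₖ)`, a lift of the form `η • ℓ k + P • γ k + R • γ (k + 1)` in a family containing
`η • γ (k + 1)` is the lift of the partner of `ḡₖ` or of `gₖ₊₁`. -/
theorem lift_coeffs (h₃ : A.IsGKM 3) (k : ℕ) {M : G.E → (Fin m → ℤ)} {ℓ' : Fin m → ℤ}
    (hM : QFam G A.label Q.lam Q.qpair (G.tgt (H.g k)) M ℓ') {η : ℤ} (hη : η = 1 ∨ η = -1)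
    (hMg : M (H.g (k + 1)) = η • H.γ (k + 1)) {b : G.E} (hb : G.src b = G.tgt (H.g k))
    {P R : ℤ} (hMb : M b = η • H.ℓ k + P • H.γ k + R • H.γ (k + 1)) :
    (P = η ∧ R = 0) ∨ (P = 0 ∧ R = -η) := by
  have hw : ℓ' = η • H.ℓ k := ((H.qfam k).sign_smul Q hη).weight_eq Q hM (H.src_succ k)
    (by rw [hMg, Pi.smul_apply, H.L_succ])
  have hqb : Q.qpair b = G.bar (H.g k) ∨ Q.qpair b = H.g (k + 1) := by
    obtain ⟨s₁, -, h₁⟩ := ((H.qfam k).2 _ rfl).1.exists_sign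
    obtain ⟨s₂, -, h₂⟩ := (H.pm_label_succ k).exists_sign
    obtain ⟨s₃, hs₃, h₃'⟩ := (hM.2 _ ((Q.qpair_src b).trans hb)).1.exists_sign
    rw [H.L_bar] at h₁
    rw [hM.apply_qpair Q hb, hw, hMb] at h₃'
    refine h₃.eq_or_eq_of_linear_relation (H.src_succ k) ((Q.qpair_src b).trans hb) (H.bar_ne k)
      (a := P * s₁) (b := -(R * s₂)) (c := -s₃) (by omega) ?_
    linear_combination (norm := module) -P • h₁ + R • h₂ + h₃'
  rcases hqb with h | h <;> rw [← Q.qpair_invol b, h] at hMb hb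
  · have hpm := (hM.2 _ hb).1.trans ((H.qfam k).2 _ hb).1.symm
    rw [(H.qfam k).apply_qpair Q rfl, H.L_bar] at hpm
    rcases hpm with hpm | hpm
    · have := H.eq_coeffs h₃ k (a := P) (b := R) (c := η) (a' := 1) (b' := 0) (c' := 1)
        (by linear_combination (norm := module) -hMb + hpm)
      omega
    · have := H.eq_coeffs h₃ k (a := P) (b := R) (c := η) (a' := -1) (b' := 0) (c' := -1)
        (by linear_combination (norm := module) -hMb + hpm)
      omega
  · rw [hM.apply_qpair Q (H.src_succ k), hw, hMg] at hMb
    have := H.eq_coeffs h₃ k (a := P) (b := R) (c := η) (a' := 0) (b' := -η) (c' := η)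
      (by linear_combination (norm := module) -hMb)
    omega


theorem exists_weight_succ (hquat : QuatFacesBiangleOrTriangle Q C)
    (hpair : C.PreservesQPairs Q) (k : ℕ) :
    ∃ c : ℤ, (c = -2 ∨ c = -1) ∧ H.ℓ (k + 1) = H.ℓ k + c • H.γ (k + 1) := by
  rcases H.weight_succ hquat hpair k with ⟨h, -⟩ | ⟨h, -⟩
  · exact ⟨-2, Or.inl rfl, by rw [h]; module⟩
  · exact ⟨-1, Or.inr rfl, by rw [h]; module⟩

theorem apply_qpair_succ (k : ℕ) {M : G.E → (Fin m → ℤ)} {ℓ' : Fin m → ℤ}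
    (hM : QFam G A.label Q.lam Q.qpair (G.tgt (H.g (k + 1))) M ℓ') {η : ℤ}
    (hη : η = 1 ∨ η = -1) (hMbar : M (G.bar (H.g (k + 1))) = -(η • H.γ (k + 1))) :
    ∃ e : ℤ, (e = 1 ∨ e = -1) ∧ M (Q.qpair (H.g (k + 2))) = η • H.ℓ (k + 1) - e • H.γ (k + 2) := by
  have hw : ℓ' = η • H.ℓ (k + 1) := ((H.qfam (k + 1)).sign_smul Q hη).weight_eq Q hM rfl
    (by rw [hMbar, Pi.smul_apply, H.L_bar, smul_neg])
  obtain ⟨e, he, hMg⟩ := ((hM.2 _ (H.src_succ (k + 1))).1.trans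
    (H.pm_label_succ (k + 1)).symm).exists_sign
  exact ⟨e, he, by rw [hM.apply_qpair Q (H.src_succ (k + 1)), hw, hMg]⟩

def face (k : ℕ) : ℕ → G.E := connPath G C (H.g (k + 1)) (Q.qpair (G.bar (H.g k)))

theorem src_qpair_bar (k : ℕ) : G.src (Q.qpair (G.bar (H.g k))) = G.src (H.g (k + 1)) :=
  (Q.qpair_src _).trans (H.src_succ k).symm

theorem src_face_succ (k j : ℕ) : G.src (H.face k (j + 1)) = G.tgt (H.face k j) :=
  src_connPath_succ C (H.src_qpair_bar k) j

theorem face_one (hpair : C.PreservesQPairs Q) (k : ℕ) : H.face k 1 = Q.qpair (H.g (k + 2)) := by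
  rw [face, connPath_one, hpair _ _ (H.src_succ k).symm, H.map_bar]

theorem not_signedStructureOn_face (h₃ : A.IsGKM 3) (hquat : QuatFacesBiangleOrTriangle Q C)
    (hpair : C.PreservesQPairs Q) (k : ℕ) {N : ℕ} (hN : IsPeriod (H.face k) N) {a : ℤ}
    (ha : a = 0 ∨ a = 1) {δ : ℕ → (Fin m → ℤ)} (hδ : SignedStructureOn G A Q (H.face k) N δ)
    (hrec : ∀ j, δ (j + 2) = a • δ (j + 1) - δ j) : False := by
  obtain ⟨η, hη, hδ₀⟩ := ((hδ.2.1 0).trans (H.pm_label_succ k).symm).exists_sign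
  obtain ⟨ℓ₁, M₁, hM₁, hM₁l⟩ := hδ.2.2.2 0
  have hM₁bar : M₁ (G.bar (H.g (k + 1))) = -(η • H.γ (k + 1)) := by
    rw [← hδ₀]; exact hM₁l _ (List.mem_cons_self ..)
  obtain ⟨e, he, hδ₁⟩ := H.apply_qpair_succ k hM₁ hη hM₁bar
  have hM₁face : M₁ (H.face k 1) = δ 1 := hM₁l (H.face k 1, δ 1) (by simp)
  rw [← H.face_one hpair, hM₁face] at hδ₁
  obtain ⟨b, ℓ₂, hb, M₂, hM₂, hM₂l⟩ := hδ.exists_qcompat_last (H.src_qpair_bar k) hN hrec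
  obtain ⟨c, hc, hℓ⟩ := H.exists_weight_succ hquat hpair k
  have := H.lift_coeffs h₃ k (hM := (H.src_succ k) ▸ hM₂) hη
    (by rw [← hδ₀]; exact hM₂l (H.g (k + 1), δ 0) (by simp)) (b := b) (hb.trans (H.src_succ k))
    (P := e) (R := η * c - e - a * η)
    (by rw [hM₂l (b, δ 1 - a • δ 0) (by simp), hδ₁, hδ₀, hℓ, H.γ_add_two]; module)
  rcases hη with rfl | rfl <;> omega

theorem face_three (h₃ : A.IsGKM 3) (hquat : QuatFacesBiangleOrTriangle Q C)
    (hcplx : ComplexFacesTriangleQuadrangleHexagon Q C) (hpair : C.PreservesQPairs Q) (k : ℕ) :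
    H.face k 3 = H.g (k + 1) := by
  have hne : Q.qpair (G.bar (H.g k)) ≠ H.g (k + 1) := fun h =>
    H.qpair_ne k (by rw [← h, Q.qpair_invol])
  obtain ⟨N, hN⟩ := exists_minPeriod_connPath C (H.src_qpair_bar k)
  have hcomplex : ¬ IsQuatPath G Q (H.face k) := fun h => by
    have h0 := h 0
    rw [H.face_one hpair, Q.qpair_invol] at h0
    exact H.bar_ne (k + 1) h0.symm
  rcases hcplx _ _ (H.src_qpair_bar k) hne N hN hcomplex with rfl | ⟨rfl, δ, hδ, hrec⟩ |
    ⟨rfl, δ, hδ, hrec⟩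
  · exact hN.1.2 0
  · exact (H.not_signedStructureOn_face h₃ hquat hpair k hN.1 (Or.inl rfl) hδ
      (fun j => by rw [hrec, zero_smul, zero_sub])).elim
  · exact (H.not_signedStructureOn_face h₃ hquat hpair k hN.1 (Or.inr rfl) hδ
      (fun j => by rw [hrec, one_smul])).elim


theorem exists_edge_of_face (h₃ : A.IsGKM 3) (hquat : QuatFacesBiangleOrTriangle Q C)
    (hcplx : ComplexFacesTriangleQuadrangleHexagon Q C) (hC : CompatibleConn G A.label C)
    (hpair : C.PreservesQPairs Q) (k : ℕ) :
    ∃ u : G.E, ∃ j : ℤ, j ≠ 0 ∧ G.src u = G.tgt (H.g k) ∧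
      G.tgt u = G.tgt (Q.qpair (H.g (k + 2))) ∧
      PM (A.label u) (H.ℓ k + H.γ k + j • H.γ (k + 1)) := by
  have hne : Q.qpair (G.bar (H.g k)) ≠ H.g (k + 1) := fun h =>
    H.qpair_ne k (by rw [← h, Q.qpair_invol])
  have h3 := H.face_three h₃ hquat hcplx hpair k
  obtain ⟨σ, hσ, hlabel⟩ := label_connPath_two_of_triangle hC (H.src_qpair_bar k) hne h3
  obtain ⟨c, hc, hℓ⟩ := H.exists_weight_succ hquat hpair k
  obtain ⟨s₁, hs₁, h₁⟩ := (H.pm_label_succ k).symm.exists_sign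
  have hq : G.src (Q.qpair (H.g (k + 2))) = G.tgt (H.g (k + 1)) :=
    (Q.qpair_src _).trans (H.src_succ (k + 1))
  obtain ⟨s₂, hs₂, h₂⟩ := ((H.qfam (k + 1)).2 _ hq).1.symm.exists_sign
  rw [(H.qfam (k + 1)).apply_qpair Q (H.src_succ (k + 1)), H.L_succ] at h₂
  have hsrc₃ : G.src (H.face k 3) = G.tgt (H.face k 2) := H.src_face_succ k 2
  have hsrc₂ : G.src (H.face k 2) = G.tgt (H.face k 1) := H.src_face_succ k 1
  rw [h3] at hsrc₃
  refine ⟨G.bar (H.face k 2), c - 1 + σ * s₂ * s₁, ?_, ?_, ?_, ?_⟩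
  · rcases hc with rfl | rfl <;> rcases hσ with rfl | rfl <;> rcases hs₁ with rfl | rfl <;>
      rcases hs₂ with rfl | rfl <;> decide
  · exact hsrc₃.symm.trans (H.src_succ k)
  · rw [Graph.tgt_bar]
    exact hsrc₂.trans (congrArg G.tgt (H.face_one hpair k))
  · have hvec : A.label (H.g (k + 1)) + σ • A.label (H.face k 1) =
        (σ * s₂) • (H.ℓ k + H.γ k + (c - 1 + σ * s₂ * s₁) • H.γ (k + 1)) := by
      rw [H.face_one hpair, h₁, h₂, hℓ, H.γ_add_two]
      rcases hσ with rfl | rfl <;> rcases hs₂ with rfl | rfl <;> module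
    have hsign : σ * s₂ = 1 ∨ σ * s₂ = -1 := by
      rcases hσ with rfl | rfl <;> rcases hs₂ with rfl | rfl <;> simp
    exact (A.label_bar _).trans (hlabel.trans (hvec ▸ PM.sign_smul hsign (Or.inl rfl)))

theorem pm_lam_tgt_qpair (hquat : QuatFacesBiangleOrTriangle Q C)
    (hpair : C.PreservesQPairs Q) (k : ℕ) :
    ∃ x y ν : ℤ, (ν = 0 ∨ ν = 1) ∧
      PM (Q.lam (G.tgt (Q.qpair (H.g (k + 2))))) (x • H.γ k + y • H.γ (k + 1) + ν • H.ℓ k) := by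
  obtain ⟨c, -, hℓ⟩ := H.exists_weight_succ hquat hpair k
  rcases H.weight_succ hquat hpair (k + 1) with ⟨hℓ₂, hlam⟩ | ⟨-, hlam⟩
  · refine ⟨2, c - 2, 1, Or.inr rfl, ?_⟩
    convert hlam using 1
    rw [hℓ₂, hℓ, H.γ_add_two]; module
  · refine ⟨-1, 1, 0, Or.inl rfl, ?_⟩
    convert hlam using 1
    rw [H.γ_add_two]; module

end ComplexHexagonData

theorem isEmpty_complexHexagonData (h₃ : A.IsGKM 3) (hquat : QuatFacesBiangleOrTriangle Q C)
    (hcplx : ComplexFacesTriangleQuadrangleHexagon Q C) (hC : CompatibleConn G A.label C)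
    (hpair : C.PreservesQPairs Q) : IsEmpty (ComplexHexagonData A Q C) := by
  refine ⟨fun H => ?_⟩
  obtain ⟨u, j, hj, hus, hut, hu⟩ := H.exists_edge_of_face h₃ hquat hcplx hC hpair 0
  have hLu : H.L 0 u = -(H.ℓ 0 + H.γ 0 + j • H.γ 1) := by
    rcases ((H.qfam 0).2 u hus).1.trans hu with h | h
    · have := H.lift_coeffs h₃ 0 (H.qfam 0) (Or.inl rfl) (by rw [H.L_succ, one_smul]) hus
        (P := 1) (R := j) (by rw [h]; module)
      omega
    · exact h
  have hL : QFam G A.label Q.lam Q.qpair (G.src u) (H.L 0) (H.ℓ 0) := hus ▸ H.qfam 0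
  obtain ⟨M, ℓ', hM, hMu, -⟩ := hL.exists_transport Q rfl
  obtain ⟨μ, hμ, hℓ'⟩ : ∃ μ : ℤ, (μ = 1 ∨ μ = 2) ∧
      ℓ' = μ • H.γ 0 + (μ * j) • H.γ 1 + (1 + μ) • H.ℓ 0 := by
    rcases hL.transport_eq_of_quatFaces hquat hpair hM hMu with ⟨h, -⟩ | ⟨h, -⟩
    · exact ⟨2, Or.inr rfl, by rw [h, hLu]; module⟩
    · exact ⟨1, Or.inl rfl, by rw [h, hLu]; module⟩
  obtain ⟨x, y, ν, hν, hlam⟩ := H.pm_lam_tgt_qpair hquat hpair 0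
  rcases hM.1.trans (hut ▸ hlam) with h | h <;> rw [hℓ'] at h
  · have := H.eq_coeffs h₃ 0 h
    omega
  · have := H.eq_coeffs h₃ 0 (a' := -x) (b' := -y) (c' := -ν) (by rw [h]; module)
    omega

theorem nonempty_complexHexagonData (hpair : C.PreservesQPairs Q) {e f : G.E}
    (hf : G.src f = G.src e) (hcomplex : ¬ IsQuatPath G Q (connPath G C e f))
    (h6 : MinPeriod (connPath G C e f) 6) {γ : ℕ → (Fin m → ℤ)}
    (hγ : SignedStructureOn G A Q (connPath G C e f) 6 γ)
    (hrec : ∀ k, γ (k + 2) = γ (k + 1) - γ k) :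
    Nonempty (ComplexHexagonData A Q C) := by
  set g := connPath G C e f
  have hshift : ∀ k j, g (k + 6 + j) = g (k + j) := fun k j => by
    rw [add_right_comm, h6.1.2]
  have bar_ne : ∀ k, G.bar (g k) ≠ g (k + 1) := by
    intro k₀ hk₀
    have h := forall_of_periodic_of_succ (P := fun k => G.bar (g k) = g (k + 1)) (N := 6)
      (by norm_num) (fun k hk => by rwa [hshift k 0, hshift k 1] at hk)
      (fun k hk => by
        show G.bar (g (k + 1)) = C.map (g (k + 1)) (G.bar (g k))
        rw [hk, C.map_self]) hk₀
    have h2 : IsPeriod g 2 := ⟨two_pos, fun k => by rw [← h (k + 1), ← h k, G.bar_invol]⟩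
    exact absurd (h6.2 2 h2) (by norm_num)
  have qpair_ne : ∀ k, Q.qpair (g (k + 1)) ≠ G.bar (g k) := fun k₀ hk₀ =>
    hcomplex (forall_of_periodic_of_succ (N := 6) (by norm_num)
      (fun k hk => by rwa [hshift k 0, hshift k 1] at hk) (qpair_connPath_add_two hpair) hk₀)
  choose ℓ L hL hLlist using hγ.2.2.2
  exact ⟨{ g, γ, L, ℓ, bar_ne, qpair_ne
           src_succ := src_connPath_succ C hf
           map_bar := fun _ => rfl
           γ_add_two := hrec
           qfam := hL
           L_bar := fun k => hLlist k (G.bar (g k), -γ k) (by simp)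
           L_succ := fun k => hLlist k (g (k + 1), γ (k + 1)) (by simp) }⟩

end Hexagon

/-- If every quaternionic 2-face is a biangle or a noncomplex triangle, and every complex
2-face is a triangle, a quadrangle with the standard signed structure, or a hexagon with
the standard signed structure, then there are no complex hexagons. -/
theorem no_complex_hexagon (G : Graph) {m : ℕ} (A : Axial G m) (Q : QuatStructure G A)
    (h₃ : A.IsGKM 3)
    (hfaces : ∀ C : Connection G, CompatibleConn G A.label C →
      ∀ e f, G.src f = G.src e → f ≠ e → ∀ N, MinPeriod (connPath G C e f) N →
        (IsQuatPath G Q (connPath G C e f) →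
          N = 2 ∨ IsNoncomplexTriangle G Q (connPath G C e f)) ∧
        (¬ IsQuatPath G Q (connPath G C e f) →
          N = 3 ∨
          (N = 4 ∧ ∃ γ, SignedStructureOn G A Q (connPath G C e f) 4 γ ∧
            ∀ k, γ (k + 2) = -(γ k)) ∨
          (N = 6 ∧ ∃ γ, SignedStructureOn G A Q (connPath G C e f) 6 γ ∧
            ∀ k, γ (k + 2) = γ (k + 1) - γ k))) :
    ∀ C : Connection G, CompatibleConn G A.label C →
      ∀ e f, G.src f = G.src e → f ≠ e →
        ¬ (¬ IsQuatPath G Q (connPath G C e f) ∧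
            MinPeriod (connPath G C e f) 6) := by
  rintro C hC e f hf hfe ⟨hcomplex, h6⟩
  obtain ⟨C₂, hC₂, hpair, -⟩ := Q.cond₂
  rw [connPath_eq_of_compatible h₃ hC hC₂ hf] at hcomplex h6
  have hquat : QuatFacesBiangleOrTriangle Q C₂ := fun e f hf hfe N hN =>
    (hfaces C₂ hC₂ e f hf hfe N hN).1
  have hcplx : ComplexFacesTriangleQuadrangleHexagon Q C₂ := fun e f hf hfe N hN =>
    (hfaces C₂ hC₂ e f hf hfe N hN).2
  obtain ⟨γ, hγ, hrec⟩ : ∃ γ, SignedStructureOn G A Q (connPath G C₂ e f) 6 γ ∧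
      ∀ k, γ (k + 2) = γ (k + 1) - γ k := by
    rcases hcplx e f hf hfe 6 h6 hcomplex with h | ⟨h, -⟩ | ⟨-, h⟩
    · omega
    · omega
    · exact h
  obtain ⟨H⟩ := nonempty_complexHexagonData hpair hf hcomplex h6 hγ hrec
  exact (isEmpty_complexHexagonData h₃ hquat hcplx hC₂ hpair).false H

end GKMQ
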